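/- arXiv:1703.08641 — 2 statements merged into one kernel-verified Lean document; each statement's English description precedes it below -/
import Mathlib

section
/- Define, for 0 ≤ k ≤ n, U_k = {(ξ, η, v) ∈ M_{n,p}(ℂ) ⊕ M_{q,n}(ℂ) ⊕ M_n(ℂ) : ξ_{ij} = 0 for i > k, η_{i'j'} = 0 for j' ≤ k, v strictly upper triangular}. Then U_k is a linear subspace of dimension (n² − n)/2 + pk + q(n − k), and every element of U_k lies in the null cone: for each w ∈ U_k, the closure of the GL_n-orbit of w contains 0; equivalently, all the invariants trace(A^m) (m ≥ 1) and C A^m B (m ≥ 0) vanish on U_k. -/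
/-!
`U_k` is cut out by the vanishing of prescribed matrix entries, so it is a coordinate subspace
whose dimension counts the free entries: `k p` in `ξ`, `q (n - k)` in `η` and `n choose 2` in `v`.

For the invariants: powers of the strictly upper triangular `v` are upper triangular, so the
diagonal of `v ^ (m + 1) = v ^ m * v` vanishes. Upper triangular matrices preserve the span
of the first `k` basis vectors, which contains the columns of `ξ` and is killed by `η`.
-/

open Matrix

/-- Membership in the maximal unstable subspace U_k. -/
def inU (n p q k : ℕ) (ξ : Matrix (Fin n) (Fin p) ℂ) (η : Matrix (Fin q) (Fin n) ℂ)
    (v : Matrix (Fin n) (Fin n) ℂ) : Prop :=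
  (∀ i : Fin n, k ≤ (i : ℕ) → ∀ j, ξ i j = 0) ∧
  (∀ i, ∀ j : Fin n, (j : ℕ) < k → η i j = 0) ∧
  (∀ i j : Fin n, (j : ℕ) ≤ (i : ℕ) → v i j = 0)

namespace Submodule

variable {R M N : Type*} [Ring R] [AddCommGroup M] [AddCommGroup N] [Module R M] [Module R N]

def prodEquiv (p : Submodule R M) (q : Submodule R N) : p.prod q ≃ₗ[R] p × q where
  toFun x := (⟨x.1.1, x.2.1⟩, ⟨x.1.2, x.2.2⟩)
  invFun x := ⟨(x.1.1, x.2.1), ⟨x.1.2, x.2.2⟩⟩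
  map_add' _ _ := rfl
  map_smul' _ _ := rfl

theorem finrank_prod [StrongRankCondition R] (p : Submodule R M) (q : Submodule R N)
    [Module.Free R p] [Module.Free R q] [Module.Finite R p] [Module.Finite R q] :
    Module.finrank R (p.prod q) = Module.finrank R p + Module.finrank R q := by
  rw [(prodEquiv p q).finrank_eq, Module.finrank_prod]

end Submodule

namespace Matrix

section Supported

variable {ι κ R : Type*} [Semiring R]

variable (R) in
def supported (S : Set (ι × κ)) : Submodule R (Matrix ι κ R) where
  carrier := {A | ∀ i j, (i, j) ∉ S → A i j = 0}
  add_mem' hA hB i j h := by simp [hA i j h, hB i j h]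
  zero_mem' _ _ _ := rfl
  smul_mem' c A hA i j h := by simp [hA i j h]

theorem mem_supported {S : Set (ι × κ)} {A : Matrix ι κ R} :
    A ∈ supported R S ↔ ∀ i j, (i, j) ∉ S → A i j = 0 := Iff.rfl

variable (R) in
def supportedEquiv (S : Set (ι × κ)) [DecidablePred (· ∈ S)] :
    supported R S ≃ₗ[R] (S → R) where
  toFun A s := A.1 s.1.1 s.1.2
  invFun g := ⟨fun i j => if h : (i, j) ∈ S then g ⟨(i, j), h⟩ else 0, fun _ _ h => dif_neg h⟩
  left_inv A := by
    ext i j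
    by_cases h : (i, j) ∈ S
    · simp [h]
    · simp [h, A.2 i j h]
  right_inv g := by
    funext s
    simp
  map_add' _ _ := rfl
  map_smul' _ _ := rfl

theorem finrank_supported [StrongRankCondition R] [Finite ι] [Finite κ] (S : Set (ι × κ)) :
    Module.finrank R (supported R S) = S.ncard := by
  classical
  have := Fintype.ofFinite (ι × κ)
  rw [(supportedEquiv R S).finrank_eq, Module.finrank_fintype_fun_eq_card,
    ← Nat.card_eq_fintype_card, Nat.card_coe_set_eq]

end Supported

def IsStrictUpperTriangular {m R : Type*} [LE m] [Zero R] (M : Matrix m m R) : Prop :=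
  ∀ ⦃i j⦄, j ≤ i → M i j = 0

variable {l m o R : Type*}

theorem IsStrictUpperTriangular.isUpperTriangular [LinearOrder m] [Zero R] {M : Matrix m m R}
    (hM : M.IsStrictUpperTriangular) : M.IsUpperTriangular :=
  fun _ _ h => hM h.le

variable [Fintype m] [NonUnitalNonAssocSemiring R]

theorem IsUpperTriangular.trace_mul_eq_zero [LinearOrder m] {A B : Matrix m m R}
    (hA : A.IsUpperTriangular) (hB : B.IsStrictUpperTriangular) : trace (A * B) = 0 := by
  refine Finset.sum_eq_zero fun i _ => ?_
  rw [diag_apply, mul_apply]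
  refine Finset.sum_eq_zero fun j _ => ?_
  rcases lt_or_ge j i with hji | hij
  · rw [hA hji, zero_mul]
  · rw [hB hij, mul_zero]

theorem mul_eq_zero_of_cols_of_rows (s : Set m) {C : Matrix l m R} {B : Matrix m o R}
    (hC : ∀ a, ∀ j ∉ s, C a j = 0) (hB : ∀ i ∈ s, ∀ b, B i b = 0) : C * B = 0 := by
  ext a b
  rw [mul_apply, zero_apply]
  refine Finset.sum_eq_zero fun j _ => ?_
  by_cases hj : j ∈ s
  · rw [hB j hj b, mul_zero]
  · rw [hC a j hj, zero_mul]

theorem IsUpperTriangular.mul_apply_eq_zero_of_notMem [LinearOrder m] {s : Set m}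
    (hs : IsUpperSet s) {C : Matrix l m R} {M : Matrix m m R} (hM : M.IsUpperTriangular)
    (hC : ∀ a, ∀ j ∉ s, C a j = 0) (a : l) {j : m} (hj : j ∉ s) : (C * M) a j = 0 := by
  rw [mul_apply]
  refine Finset.sum_eq_zero fun i _ => ?_
  by_cases hi : i ∈ s
  · rw [hM (lt_of_not_ge fun hij => hj (hs hij hi)), mul_zero]
  · rw [hC a i hi, zero_mul]

end Matrix

theorem Fin.ncard_setOf_fst_lt_snd (n : ℕ) :
    {ij : Fin n × Fin n | ij.1 < ij.2}.ncard = (n ^ 2 - n) / 2 := by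
  rw [← Nat.card_coe_set_eq, Set.coe_ofPred, Nat.card_eq_fintype_card, Fintype.card_subtype,
    Fintype.card_product_filter_lt, Nat.choose_two_right, Fintype.card_fin, Nat.mul_sub_one, sq]

section UnstableSubspace

variable (n p q k : ℕ)

def unstableSubspace :
    Submodule ℂ (Matrix (Fin n) (Fin p) ℂ × Matrix (Fin q) (Fin n) ℂ × Matrix (Fin n) (Fin n) ℂ) :=
  (supported ℂ ({i : Fin n | (i : ℕ) < k} ×ˢ Set.univ)).prod
    ((supported ℂ (Set.univ ×ˢ {i : Fin n | (i : ℕ) < k}ᶜ)).prod (supported ℂ {ij | ij.1 < ij.2}))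

theorem coe_unstableSubspace :
    ↑(unstableSubspace n p q k) = {w : Matrix (Fin n) (Fin p) ℂ × Matrix (Fin q) (Fin n) ℂ ×
      Matrix (Fin n) (Fin n) ℂ | inU n p q k w.1 w.2.1 w.2.2} := by
  ext w
  simp [unstableSubspace, mem_supported, inU, forall_comm (α := Fin p)]

variable {n k} in
theorem finrank_unstableSubspace (hk : k ≤ n) :
    Module.finrank ℂ (unstableSubspace n p q k) = (n ^ 2 - n) / 2 + p * k + q * (n - k) := by
  have hlow : {i : Fin n | (i : ℕ) < k}.ncard = k := by
    rw [← Nat.card_coe_set_eq, Set.coe_ofPred, Nat.card_eq_fintype_card,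
      Fintype.card_fin_lt_of_le hk]
  rw [unstableSubspace, Submodule.finrank_prod, Submodule.finrank_prod, finrank_supported,
    finrank_supported, finrank_supported, Set.ncard_prod, Set.ncard_prod, Set.ncard_compl, hlow,
    Fin.ncard_setOf_fst_lt_snd]
  simp only [Set.ncard_univ, Nat.card_fin]
  ring

end UnstableSubspace

namespace inU

variable {n p q k : ℕ} {ξ : Matrix (Fin n) (Fin p) ℂ} {η : Matrix (Fin q) (Fin n) ℂ}
  {v : Matrix (Fin n) (Fin n) ℂ}

theorem isStrictUpperTriangular (h : inU n p q k ξ η v) : v.IsStrictUpperTriangular :=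
  fun i j => h.2.2 i j

theorem trace_pow_eq_zero (h : inU n p q k ξ η v) {m : ℕ} (hm : 1 ≤ m) : trace (v ^ m) = 0 := by
  obtain ⟨m, rfl⟩ := Nat.exists_eq_add_of_le' hm
  have hpow : (v ^ m).IsUpperTriangular := h.isStrictUpperTriangular.isUpperTriangular.pow m
  rw [pow_succ]
  exact hpow.trace_mul_eq_zero h.isStrictUpperTriangular

theorem mul_pow_mul_eq_zero (h : inU n p q k ξ η v) (m : ℕ) : η * v ^ m * ξ = 0 := by
  have hpow : (v ^ m).IsUpperTriangular := h.isStrictUpperTriangular.isUpperTriangular.pow m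
  obtain ⟨hξ, hη, -⟩ := h
  have hs : IsUpperSet {i : Fin n | k ≤ (i : ℕ)} :=
    fun i j hij (hi : k ≤ (i : ℕ)) => (hi.trans hij : k ≤ (j : ℕ))
  refine mul_eq_zero_of_cols_of_rows {i : Fin n | k ≤ (i : ℕ)} (fun a j hj => ?_) hξ
  exact hpow.mul_apply_eq_zero_of_notMem hs (fun a j hj => hη a j (not_le.mp hj)) a hj

end inU

/-- U_k is a linear subspace of dimension (n²-n)/2 + pk + q(n-k), and all the
fundamental invariants vanish on it (so U_k is contained in the null cone). -/
theorem stmt11 (n p q k : ℕ) (hk : k ≤ n) :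
    (∃ U : Submodule ℂ (Matrix (Fin n) (Fin p) ℂ × Matrix (Fin q) (Fin n) ℂ ×
        Matrix (Fin n) (Fin n) ℂ),
      (↑U = {w : Matrix (Fin n) (Fin p) ℂ × Matrix (Fin q) (Fin n) ℂ ×
          Matrix (Fin n) (Fin n) ℂ | inU n p q k w.1 w.2.1 w.2.2}) ∧
      Module.finrank ℂ U = (n ^ 2 - n) / 2 + p * k + q * (n - k)) ∧
    (∀ ξ η v, inU n p q k ξ η v →
      (∀ m : ℕ, 1 ≤ m → Matrix.trace (v ^ m) = 0) ∧ (∀ m : ℕ, η * v ^ m * ξ = 0)) :=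
  ⟨⟨unstableSubspace n p q k, coe_unstableSubspace n p q k, finrank_unstableSubspace p q hk⟩,
    fun _ _ _ h => ⟨fun _ hm => h.trace_pow_eq_zero hm, h.mul_pow_mul_eq_zero⟩⟩
end

section
/- Let S_n act diagonally on ℂ^n × V^n (V a nonzero finite-dimensional ℂ-vector space) by permuting coordinates, and define ψ(a_1,…,a_n; v_1,…,v_n) = ((Σ_i a_i^k)_{k=1}^n ; (Σ_i a_i^k v_i)_{k=1}^n). Fix a nonzero u ∈ V and let Z = {(a; v) : a_i v_i = u for all i}. Then Z is Zariski-closed and S_n-stable, the image ψ(Z) contains no point of the form (0; w), but the closure of ψ(Z) contains the point (0; (n·u, 0, …, 0)). Hence ψ(Z) is not closed. -/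
/-! If `aᵢ • vᵢ = u ≠ 0` then no `aᵢ` vanishes, whereas by Newton's identities the vanishing of
the power sums `p₁, …, pₙ` of the `aᵢ` forces every `aᵢ` to vanish; so `ψ(Z)` misses `{0} × Vⁿ`.
On the other hand, along `aᵢ = t ζⁱ`, `vᵢ = aᵢ⁻¹ • u` with `ζ` a primitive `n`-th root of unity,
`∑ aᵢᵏ⁺¹ vᵢ = (∑ aᵢᵏ) • u = (n • u, 0, …, 0)` for every `t ≠ 0`, while the power sums tend to `0`
as `t → 0`. -/

open Finset Polynomial

section PowerSums

variable {R ι : Type*} [CommRing R] [IsDomain R] [CharZero R] [Fintype ι] {a : ι → R}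

/-- Newton's identities: `k eₖ` is a combination of the `eⱼ pₖ₋ⱼ` with `j < k`, and here every
such power sum `pₖ₋ⱼ` vanishes. -/
theorem aeval_esymm_eq_zero_of_sum_pow_eq_zero
    (h : ∀ k, 0 < k → k ≤ Fintype.card ι → ∑ i, a i ^ k = 0) {k : ℕ} (hk₀ : 0 < k)
    (hk : k ≤ Fintype.card ι) : MvPolynomial.aeval a (MvPolynomial.esymm ι R k) = 0 := by
  have newton := congrArg (MvPolynomial.aeval a) (MvPolynomial.mul_esymm_eq_sum ι R k)
  have psum_terms : ∑ p ∈ antidiagonal k with p.1 < k, (-1) ^ p.1 *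
      MvPolynomial.aeval a (MvPolynomial.esymm ι R p.1) *
        MvPolynomial.aeval a (MvPolynomial.psum ι R p.2) = 0 := by
    refine sum_eq_zero fun p hp => ?_
    rw [mem_filter, HasAntidiagonal.mem_antidiagonal] at hp
    simp [MvPolynomial.psum, h p.2 (by omega) (by omega)]
  simp only [map_mul, map_sum, map_pow, map_neg, map_one, map_natCast, psum_terms,
    mul_zero] at newton
  exact (mul_eq_zero.mp newton).resolve_left (Nat.cast_ne_zero.mpr hk₀.ne')

/-- With `e₁ = ⋯ = eₙ = 0`, Vieta gives `∏ (X - aᵢ) = Xⁿ`, so every `aᵢ` is a root of `Xⁿ`. -/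
theorem eq_zero_of_forall_sum_pow_eq_zero
    (h : ∀ k, 0 < k → k ≤ Fintype.card ι → ∑ i, a i ^ k = 0) (i : ι) : a i = 0 := by
  set s := univ.val.map a with hs
  have hcard : Multiset.card s = Fintype.card ι := by simp [hs]
  have hprod : (s.map fun t => X - C t).prod = X ^ Fintype.card ι := by
    rw [Multiset.prod_X_sub_X_eq_sum_esymm, sum_range_succ', sum_eq_zero, hcard]
    · simp [Multiset.esymm]
    intro j hj
    rw [hs, ← MvPolynomial.aeval_esymm_eq_multiset_esymm ι R,
      aeval_esymm_eq_zero_of_sum_pow_eq_zero h j.succ_pos (by simp at hj; omega)]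
    simp
  have hroot := congrArg (eval (a i)) hprod
  have hzero : (0 : R) ∈ (s.map fun t => X - C t).map (eval (a i)) := by
    simpa [hs] using ⟨i, sub_self _⟩
  rw [eval_multiset_prod, Multiset.prod_eq_zero hzero, eval_pow, eval_X] at hroot
  have : Nonempty ι := ⟨i⟩
  exact pow_eq_zero_iff Fintype.card_ne_zero |>.mp hroot.symm

end PowerSums

theorem IsPrimitiveRoot.sum_range_pow_pow_eq_zero {R : Type*} [CommRing R] [IsDomain R] {ζ : R}
    {n m : ℕ} (hζ : IsPrimitiveRoot ζ n) (hm : ¬ n ∣ m) : ∑ i ∈ range n, (ζ ^ m) ^ i = 0 := by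
  have hne : ζ ^ m - 1 ≠ 0 := sub_ne_zero.mpr fun h => hm (hζ.pow_eq_one_iff_dvd m |>.mp h)
  have hgeom := mul_geom_sum (ζ ^ m) n
  rw [pow_right_comm, hζ.pow_eq_one, one_pow, sub_self] at hgeom
  exact (mul_eq_zero.mp hgeom).resolve_left hne

theorem IsPrimitiveRoot.sum_mul_pow_pow {R : Type*} [CommRing R] [IsDomain R] {ζ : R} {n k : ℕ}
    (hζ : IsPrimitiveRoot ζ n) (hk : k < n) (t : R) :
    ∑ i : Fin n, (t * ζ ^ (i : ℕ)) ^ k = if k = 0 then (n : R) else 0 := by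
  split_ifs with hk₀
  · simp [hk₀]
  simp_rw [mul_pow, ← mul_sum, pow_right_comm ζ _ k,
    Fin.sum_univ_eq_sum_range (fun i => (ζ ^ k) ^ i),
    hζ.sum_range_pow_pow_eq_zero (Nat.not_dvd_of_pos_of_lt (Nat.pos_of_ne_zero hk₀) hk), mul_zero]

section PowerSumMap

variable {R V ι : Type*}

def powerSumMap [CommRing R] [AddCommMonoid V] [Module R V] (n : ℕ)
    (av : (Fin n → R) × (Fin n → V)) : (Fin n → R) × (Fin n → V) :=
  (fun k => ∑ i, av.1 i ^ ((k : ℕ) + 1), fun k => ∑ i, av.1 i ^ ((k : ℕ) + 1) • av.2 i)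

def smulFiber [SMul R V] (u : V) : Set ((ι → R) × (ι → V)) :=
  {av | ∀ i, av.1 i • av.2 i = u}

theorem isClosed_smulFiber [TopologicalSpace R] [TopologicalSpace V] [SMul R V]
    [ContinuousSMul R V] [T1Space V] (u : V) : IsClosed (smulFiber (R := R) (ι := ι) u) := by
  simp only [smulFiber, Set.ofPred_forall]
  exact isClosed_iInter fun i => isClosed_singleton.preimage <|
    ((continuous_apply i).comp continuous_fst).smul ((continuous_apply i).comp continuous_snd)

theorem powerSumMap_fst_ne_zero [CommRing R] [IsDomain R] [CharZero R] [AddCommMonoid V]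
    [Module R V] {n : ℕ} (hn : 0 < n) {u : V} (hu : u ≠ 0) {av : (Fin n → R) × (Fin n → V)}
    (hav : av ∈ smulFiber u) : (powerSumMap n av).1 ≠ 0 := by
  intro h₀
  have ha : av.1 ⟨0, hn⟩ = 0 := by
    refine eq_zero_of_forall_sum_pow_eq_zero (fun k hk₀ hk => ?_) _
    simpa [powerSumMap, Nat.sub_add_cancel hk₀] using
      congrFun h₀ ⟨k - 1, by rw [Fintype.card_fin] at hk; omega⟩
  apply hu
  rw [← hav ⟨0, hn⟩, ha, zero_smul]

theorem mem_closure_powerSumMap_image_smulFiber [AddCommGroup V] [Module ℂ V]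
    [TopologicalSpace V] {n : ℕ} (hn : 0 < n) (u : V) :
    ((0, fun k : Fin n => if k = ⟨0, hn⟩ then (n : ℂ) • u else 0) : (Fin n → ℂ) × (Fin n → V))
      ∈ closure (powerSumMap n '' smulFiber u) := by
  obtain ⟨ζ, hζ⟩ : ∃ ζ : ℂ, IsPrimitiveRoot ζ n := ⟨_, Complex.isPrimitiveRoot_exp n hn.ne'⟩
  let g : ℂ → (Fin n → ℂ) × (Fin n → V) := fun t =>
    (fun k => ∑ i : Fin n, (t * ζ ^ (i : ℕ)) ^ ((k : ℕ) + 1),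
      fun k => if k = ⟨0, hn⟩ then (n : ℂ) • u else 0)
  have hg : Continuous g := by fun_prop
  have hg₀ : g 0 = (0, fun k : Fin n => if k = ⟨0, hn⟩ then (n : ℂ) • u else 0) := by
    ext k <;> simp [g]
  have hg_mem : g '' {0}ᶜ ⊆ powerSumMap n '' smulFiber u := by
    rintro _ ⟨t, ht, rfl⟩
    have hne (i : Fin n) : t * ζ ^ (i : ℕ) ≠ 0 :=
      mul_ne_zero ht (pow_ne_zero _ (hζ.ne_zero hn.ne'))
    refine ⟨(fun i => t * ζ ^ (i : ℕ), fun i => (t * ζ ^ (i : ℕ))⁻¹ • u), fun i => ?_, ?_⟩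
    · rw [smul_smul, mul_inv_cancel₀ (hne i), one_smul]
    refine Prod.ext rfl (funext fun k => ?_)
    simp only [powerSumMap, smul_smul, pow_succ, mul_assoc, mul_inv_cancel₀ (hne _), mul_one,
      ← sum_smul, hζ.sum_mul_pow_pow k.isLt, g, Fin.ext_iff]
    split_ifs <;> simp
  rw [← hg₀]
  exact closure_mono hg_mem (mem_closure_image hg.continuousAt (by simp))

end PowerSumMap

/-- A toy model: the image of the closed S_n-stable set Z under ψ is not closed. -/
theorem stmt17 (n d : ℕ) (hn : 0 < n) (u : Fin d → ℂ) (hu : u ≠ 0)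
    (ψ : (Fin n → ℂ) × (Fin n → Fin d → ℂ) → (Fin n → ℂ) × (Fin n → Fin d → ℂ))
    (hψ : ψ = fun av => (fun k : Fin n => ∑ i : Fin n, av.1 i ^ ((k : ℕ) + 1),
        fun k : Fin n => ∑ i : Fin n, av.1 i ^ ((k : ℕ) + 1) • av.2 i))
    (Z : Set ((Fin n → ℂ) × (Fin n → Fin d → ℂ)))
    (hZ : Z = {av | ∀ i : Fin n, av.1 i • av.2 i = u}) :
    IsClosed Z ∧
    (∀ σ : Equiv.Perm (Fin n), ∀ av ∈ Z,
      ((fun i => av.1 (σ i), fun i => av.2 (σ i)) :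
        (Fin n → ℂ) × (Fin n → Fin d → ℂ)) ∈ Z) ∧
    (∀ av ∈ Z, (ψ av).1 ≠ 0) ∧
    ((0, fun k : Fin n => if k = (⟨0, hn⟩ : Fin n) then (n : ℂ) • u else 0)
        ∈ closure (ψ '' Z)) ∧
    ¬ IsClosed (ψ '' Z) := by
  subst hψ hZ
  have hfst (av : (Fin n → ℂ) × (Fin n → Fin d → ℂ)) (hav : av ∈ smulFiber u) :
      (powerSumMap n av).1 ≠ 0 :=
    powerSumMap_fst_ne_zero hn hu hav
  have hlimit := mem_closure_powerSumMap_image_smulFiber hn u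
  refine ⟨isClosed_smulFiber u, fun σ av hav i => hav (σ i), hfst, hlimit, fun hclosed => ?_⟩
  obtain ⟨av, hav, hψav⟩ := hclosed.closure_subset hlimit
  exact hfst av hav (congrArg Prod.fst hψav)
end
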